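/- Let G' be obtained from flow graph G by deleting edge (x, y), where x is reachable in G' and y becomes unreachable in G'. If a vertex v is affected (v is reachable in G' and d'(v) ≠ d(v)), then there is a path from y to v in G on which every vertex w satisfies depth(w) > depth(d(v)) in the dominator tree D of G. -/

import Mathlib

variable {V : Type*}

/-- `p` is a path (walk) in the digraph `E` from `a` to `b`, given as its list of vertices. -/
def IsPath (E : V → V → Prop) (a b : V) (p : List V) : Prop :=
  p.Chain' E ∧ p.head? = some a ∧ p.getLast? = some b

/-- `v` is reachable from `s` in the digraph `E`. -/
def Reach (E : V → V → Prop) (s v : V) : Prop := ∃ p, IsPath E s v p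

/-- `w` dominates `v` in the flow graph `(E, s)`. -/
def Dom (E : V → V → Prop) (s w v : V) : Prop :=
  Reach E s v ∧ ∀ p, IsPath E s v p → w ∈ p

/-- `dv` is the immediate dominator of `v`: `dv ≠ v`, `dv` dominates `v`, and every
proper dominator of `v` dominates `dv`. -/
def IsIdom (E : V → V → Prop) (s dv v : V) : Prop :=
  dv ≠ v ∧ Dom E s dv v ∧ ∀ u, Dom E s u v → u ≠ v → Dom E s u dv

/-- `u` is an ancestor of `w` in the tree given by parent function `parent` (reflexive). -/
def Anc (parent : V → V) (u w : V) : Prop := ∃ k, parent^[k] w = u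

/-- The tree with parent function `t` has the parent property for flow graph `(E, s)`. -/
def ParentProp (E : V → V → Prop) (s : V) (t : V → V) : Prop :=
  ∀ v w, E v w → Reach E s v → Anc t (t w) v

/-- The tree with parent function `t` has the sibling property for flow graph `(E, s)`. -/
def SiblingProp (E : V → V → Prop) (s : V) (t : V → V) : Prop :=
  ∀ v w, Reach E s v → Reach E s w → v ≠ s → w ≠ s → t v = t w → v ≠ w → ¬ Dom E s v w

/-- `t` is (the parent function of) a tree rooted at `s` on the reachable vertices. -/
def IsRootedTree (E : V → V → Prop) (s : V) (t : V → V) : Prop :=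
  t s = s ∧ ∀ v, Reach E s v → (v ≠ s → Reach E s (t v)) ∧ ∃ k, t^[k] v = s

/-!
Write `G'` for `G - (x, y)`. Every `G'`-path to `v` is a `G`-path, so `d v` dominates `v` and hence
`d' v` in `G'`. If `d' v` dominated `v` in `G`, it would dominate `d v` in `G` and then in `G'`,
and mutual domination forces `d' v = d v`. So some `G`-path to `v` avoids `d' v`; it cannot be a
`G'`-path, so it passes through `y`, and its suffix after the last `y` is a `G'`-path from `y` to
`v` avoiding `d' v`. Going backwards along it from `v` (of depth `depth (d v) + 1`), a vertex `u`
of depth at most `depth (d v)` whose successors are all deeper is either `d v`, and then `d' v`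
dominates `d v` in `G'`, or is dominated by `d v` in `G`, and then it is deeper than `d v`.
-/

theorem List.eq_append_cons_of_mem_notMem_right {α : Type*} {a : α} {l : List α} (h : a ∈ l) :
    ∃ l₁ l₂, l = l₁ ++ a :: l₂ ∧ a ∉ l₂ := by
  obtain ⟨l₂, l₁, hl, ha⟩ := List.eq_append_cons_of_mem (List.mem_reverse.2 h)
  refine ⟨l₁.reverse, l₂.reverse, ?_, by simpa using ha⟩
  simpa using congrArg List.reverse hl

namespace IsPath

variable {E E' : V → V → Prop} {a b c : V} {p q : List V}

theorem mono (hE : ∀ u w, E u w → E' u w) (hp : IsPath E a b p) : IsPath E' a b p :=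
  ⟨List.IsChain.imp hE hp.1, hp.2⟩

theorem exists_prefix (hp : IsPath E a b p) (hc : c ∈ p) :
    ∃ q, IsPath E a c q ∧ (c ≠ b → q.length < p.length) := by
  obtain ⟨l₁, l₂, rfl⟩ := List.append_of_mem hc
  refine ⟨l₁ ++ [c], ⟨hp.1.prefix ⟨l₂, by simp⟩, ?_, List.getLast?_concat⟩, fun hcb => ?_⟩
  · cases l₁ <;> simpa using hp.2.1
  · cases l₂ with
    | nil => exact absurd (by simpa using hp.2.2) hcb
    | cons => simp

theorem reach_of_mem (hp : IsPath E a b p) (hc : c ∈ p) : Reach E a c :=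
  let ⟨q, hq, _⟩ := hp.exists_prefix hc
  ⟨q, hq⟩

theorem suffix (hp : IsPath E a b (p ++ c :: q)) : IsPath E c b (c :: q) :=
  ⟨hp.1.suffix ⟨p, rfl⟩, rfl, by simpa [List.getLast?_append] using hp.2.2⟩

theorem append (hp : IsPath E a b p) (hq : IsPath E b c (b :: q)) : IsPath E a c (p ++ q) := by
  cases q with
  | nil => simpa [show b = c by simpa using hq.2.2] using hp
  | cons z q =>
    refine ⟨List.isChain_append.2 ⟨hp.1, (List.isChain_cons_cons.1 hq.1).2, ?_⟩, ?_, ?_⟩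
    · intro u hu w hw
      rw [hp.2.2] at hu
      simp only [Option.mem_def, Option.some.injEq, List.head?_cons] at hu hw
      exact hu ▸ hw ▸ (List.isChain_cons_cons.1 hq.1).1
    · cases p with
      | nil => simp [IsPath] at hp
      | cons => simpa using hp.2.1
    · simpa [List.getLast?_append] using hq.2.2

theorem deleteEdge {x y : V} (hp : IsPath E a b p) (hy : y ∉ p.tail) :
    IsPath (fun u w => E u w ∧ ¬ (u = x ∧ w = y)) a b p :=
  ⟨hp.1.imp_of_mem_tail_imp fun _ _ _ hw h => ⟨h, fun h' => hy (h'.2 ▸ hw)⟩, hp.2⟩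

end IsPath

theorem Reach.mono {E E' : V → V → Prop} {s v : V} (hE : ∀ u w, E u w → E' u w)
    (hv : Reach E s v) : Reach E' s v :=
  let ⟨p, hp⟩ := hv
  ⟨p, hp.mono hE⟩

theorem Reach.tail {E : V → V → Prop} {s u w : V} (hu : Reach E s u) (huw : E u w) :
    Reach E s w :=
  let ⟨p, hp⟩ := hu
  ⟨p ++ [w], hp.append ⟨List.isChain_pair.2 huw, rfl, rfl⟩⟩

namespace Dom

variable {E E' : V → V → Prop} {s a b v w : V}

theorem reach_left (h : Dom E s a b) : Reach E s a :=
  let ⟨p, hp⟩ := h.1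
  hp.reach_of_mem (h.2 p hp)

theorem restrict (hE : ∀ u w, E' u w → E u w) (h : Dom E s a b) (hb : Reach E' s b) :
    Dom E' s a b :=
  ⟨hb, fun p hp => h.2 p (hp.mono hE)⟩

theorem eq_of_dom_start (h : Dom E s a s) : a = s := by
  simpa using h.2 [s] ⟨List.isChain_singleton s, rfl, rfl⟩

theorem antisymm (hab : Dom E s a b) (hba : Dom E s b a) : a = b := by
  by_contra hne
  obtain ⟨p, hp⟩ := hab.1
  induction hn : p.length using Nat.strong_induction_on generalizing p with
  | _ n ih =>
    obtain ⟨q, hq, hqp⟩ := hp.exists_prefix (hab.2 p hp)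
    obtain ⟨r, hr, hrq⟩ := hq.exists_prefix (hba.2 q hq)
    exact ih r.length (hn ▸ (hrq (Ne.symm hne)).trans (hqp hne)) r hr rfl

theorem of_isPath {Q : List V} (ha : Dom E s a v) (hw : Reach E s w)
    (hQ : IsPath E w v (w :: Q)) (haQ : a ∉ Q) : Dom E s a w :=
  ⟨hw, fun _ hR => (List.mem_append.1 (ha.2 _ (hR.append hQ))).resolve_right haQ⟩

end Dom

theorem depth_lt_of_dom {E : V → V → Prop} {s a u : V} {d : V → V} {depth : V → ℕ}
    (hd : ∀ u, Reach E s u → u ≠ s → IsIdom E s (d u) u)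
    (hdepth : ∀ u, Reach E s u → u ≠ s → depth u = depth (d u) + 1)
    (h : Dom E s a u) (hne : a ≠ u) : depth a < depth u := by
  induction hn : depth u using Nat.strong_induction_on generalizing u with
  | _ n ih =>
    have hus : u ≠ s := by rintro rfl; exact hne h.eq_of_dom_start
    have hdu := hdepth u h.1 hus
    rcases eq_or_ne a (d u) with rfl | had
    · omega
    · have := ih (depth (d u)) (by omega) ((hd u h.1 hus).2.2 a h hne) had rfl
      omega

section Subgraph

variable {E E' : V → V → Prop} {s a b u v : V} {d : V → V} {depth : V → ℕ} {Q : List V}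

theorem depth_lt_of_isPath_of_forall_depth_lt (hE : ∀ p q, E' p q → E p q)
    (hd : ∀ u, Reach E s u → u ≠ s → IsIdom E s (d u) u)
    (hdepth : ∀ u, Reach E s u → u ≠ s → depth u = depth (d u) + 1)
    (ha : Dom E s a v) (hb : Dom E' s b v) (hab : Dom E' s a b) (hne : b ≠ a)
    (hQ : IsPath E' u v (u :: Q)) (hu : Reach E s u) (hbQ : b ∉ Q)
    (hQa : ∀ z ∈ Q, depth a < depth z) : depth a < depth u := by
  by_contra! hua
  have haQ : a ∉ Q := fun h => (hQa a h).false
  rcases eq_or_ne u a with rfl | hua'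
  · exact hne ((hb.of_isPath hab.reach_left hQ hbQ).antisymm hab)
  · exact hua.not_gt (depth_lt_of_dom hd hdepth (ha.of_isPath hu (hQ.mono hE) haQ) hua'.symm)

theorem forall_depth_lt_of_isPath (hE : ∀ p q, E' p q → E p q)
    (hd : ∀ u, Reach E s u → u ≠ s → IsIdom E s (d u) u)
    (hdepth : ∀ u, Reach E s u → u ≠ s → depth u = depth (d u) + 1)
    (ha : Dom E s a v) (hb : Dom E' s b v) (hab : Dom E' s a b) (hne : b ≠ a)
    (hQ : IsPath E' u v (u :: Q)) (hu : Reach E s u) (hbQ : b ∉ Q) :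
    ∀ z ∈ u :: Q, depth a < depth z := by
  induction Q generalizing u with
  | nil =>
    simpa using depth_lt_of_isPath_of_forall_depth_lt hE hd hdepth ha hb hab hne hQ hu hbQ (by simp)
  | cons w Q ih =>
    have hwQ : IsPath E' w v (w :: Q) := IsPath.suffix (p := [u]) hQ
    have hw : Reach E s w := hu.tail (hE _ _ (List.isChain_cons_cons.1 hQ.1).1)
    have hwQ' := ih hwQ hw fun h => hbQ (List.mem_cons_of_mem w h)
    exact List.forall_mem_cons.2 ⟨depth_lt_of_isPath_of_forall_depth_lt hE hd hdepth ha hb hab hne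
      hQ hu hbQ hwQ', hwQ'⟩

end Subgraph

theorem deletion_affected_unreachable_general (E : V → V → Prop) (s x y : V)
    (d d' : V → V) (depth : V → ℕ)
    (hd : ∀ u, Reach E s u → u ≠ s → IsIdom E s (d u) u)
    (hd' : ∀ u, Reach (fun p q => E p q ∧ ¬ (p = x ∧ q = y)) s u → u ≠ s →
      IsIdom (fun p q => E p q ∧ ¬ (p = x ∧ q = y)) s (d' u) u)
    (hdepth : ∀ u, Reach E s u → u ≠ s → depth u = depth (d u) + 1)
    (v : V) (hv : Reach (fun p q => E p q ∧ ¬ (p = x ∧ q = y)) s v) (hvs : v ≠ s)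
    (haff : d' v ≠ d v) :
    ∃ p, IsPath E y v p ∧ ∀ w ∈ p, depth (d v) < depth w := by
  set E' : V → V → Prop := fun p q => E p q ∧ ¬ (p = x ∧ q = y)
  have hE : ∀ p q, E' p q → E p q := fun _ _ h => h.1
  have hidom := hd v (hv.mono hE) hvs
  have hidom' := hd' v hv hvs
  have hdv : Dom E' s (d v) v := hidom.2.1.restrict hE hv
  have hdv_d'v : Dom E' s (d v) (d' v) := hidom'.2.2 _ hdv hidom.1
  obtain ⟨P, hP, hd'P⟩ : ∃ P, IsPath E s v P ∧ d' v ∉ P := by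
    by_contra! h
    have hd'v_dv : Dom E s (d' v) (d v) := hidom.2.2 _ ⟨hidom.2.1.1, h⟩ hidom'.1
    exact haff ((hd'v_dv.restrict hE hdv.reach_left).antisymm hdv_d'v)
  have hyP : y ∈ P := by
    by_contra hyP
    exact hd'P (hidom'.2.1.2 P (hP.deleteEdge fun h => hyP (List.mem_of_mem_tail h)))
  obtain ⟨P₁, P₂, rfl, hyP₂⟩ := List.eq_append_cons_of_mem_notMem_right hyP
  have hQ : IsPath E y v (y :: P₂) := hP.suffix
  exact ⟨y :: P₂, hQ, forall_depth_lt_of_isPath hE hd hdepth hidom.2.1 hidom'.2.1 hdv_d'v haff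
    (hQ.deleteEdge hyP₂) (hP.reach_of_mem hyP) fun h => hd'P (by simp [h])⟩

/-- After deleting edge `(x, y)`, with `x` reachable in `G'` and `y` unreachable in `G'`,
every affected vertex `v` admits a path from `y` to `v` in `G` all of whose vertices
have depth greater than `depth (d v)` in the dominator tree of `G`. -/
theorem deletion_affected_unreachable (E : V → V → Prop) (s x y : V)
    (d d' : V → V) (depth : V → ℕ)
    (hd : ∀ u, Reach E s u → u ≠ s → IsIdom E s (d u) u)
    (hd' : ∀ u, Reach (fun p q => E p q ∧ ¬ (p = x ∧ q = y)) s u → u ≠ s →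
      IsIdom (fun p q => E p q ∧ ¬ (p = x ∧ q = y)) s (d' u) u)
    (hdepth0 : depth s = 0)
    (hdepth : ∀ u, Reach E s u → u ≠ s → depth u = depth (d u) + 1)
    (hx : Reach (fun p q => E p q ∧ ¬ (p = x ∧ q = y)) s x)
    (hy : ¬ Reach (fun p q => E p q ∧ ¬ (p = x ∧ q = y)) s y)
    (v : V) (hv : Reach (fun p q => E p q ∧ ¬ (p = x ∧ q = y)) s v) (hvs : v ≠ s)
    (haff : d' v ≠ d v) :
    ∃ p, IsPath E y v p ∧ ∀ w ∈ p, depth (d v) < depth w :=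
  deletion_affected_unreachable_general E s x y d d' depth hd hd' hdepth v hv hvs haff
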